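/- arXiv:1808.01254 — 7 statements merged into one kernel-verified Lean document; each statement's English description precedes it below -/
import Mathlib

section
/- Let r ≥ 2 be an integer, p ∈ ℝ, q ≥ 0, and define f(t) = (r-1)(1+t)^p / ((1+qt)^2 (1+t)^2) · (q^2(r-2) t^3 + b t^2 + c t + d) for t ≥ 0, where b = q((2-r)p^2 + 2(r-3)p + 2(r-2)q + r), c = (2-r)p^2 + 2(r-1)pq + (r-2)q^2 + 2(r-2)p + 2rq, and d = r(2p+q). Then f is constant on [0,∞) if and only if (p,q) = (0,0) or (p,q) = (2,0). -/
/-!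
Constancy of `fiberScal` on `[0, ∞)` says `(1 + t) ^ p * P t = K * ((1 + q t)² (1 + t)²)` for
the cubic `P = fiberNum`. Differentiating and eliminating `(1 + t) ^ p` gives the polynomial
identity `(1 + q t) ((1 + t) P' + p P) = 2 (1 + q + 2 q t) P`, a quartic in `t` vanishing on
`(0, ∞)`, so all its coefficients vanish. For `q > 0` the quartic coefficient forces `p = 1` or
`r = 2`, the cubic one then `p = 2`, and both contradict the constant coefficient; for `q = 0`
the constant coefficient is `(r + 2) p (p - 2)`.
-/

/-- Fiber scalar curvature of the generalized Cheeger–Gromoll metric `h_{p,q}`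
on a rank-`r` Euclidean vector bundle, as a function of `t = |a|^2`. -/
noncomputable def fiberScal (r p q t : ℝ) : ℝ :=
  (r - 1) * (1 + t) ^ p / ((1 + q * t) ^ 2 * (1 + t) ^ 2) *
    (q ^ 2 * (r - 2) * t ^ 3
      + (q * ((2 - r) * p ^ 2 + 2 * (r - 3) * p + 2 * (r - 2) * q + r)) * t ^ 2
      + ((2 - r) * p ^ 2 + 2 * (r - 1) * p * q + (r - 2) * q ^ 2
          + 2 * (r - 2) * p + 2 * r * q) * t
      + r * (2 * p + q))

open Filter Topology

theorem HasDerivAt.mul_deriv_eq_of_mul_eventuallyEq {u P Q : ℝ → ℝ} {u' P' Q' K t : ℝ}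
    (hu : HasDerivAt u u' t) (hP : HasDerivAt P P' t) (hQ : HasDerivAt Q Q' t)
    (h : (fun s => u s * P s) =ᶠ[𝓝 t] fun s => K * Q s) :
    Q t * (u' * P t + u t * P') = u t * Q' * P t := by
  have hderiv : u' * P t + u t * P' = K * Q' :=
    (hu.mul hP).unique ((hQ.const_mul K).congr_of_eventuallyEq h)
  linear_combination Q t * hderiv - Q' * h.eq_of_nhds

theorem quartic_coeffs_eq_zero_of_forall_pos {a b c d e : ℝ}
    (h : ∀ t > (0 : ℝ), a * t ^ 4 + b * t ^ 3 + c * t ^ 2 + d * t + e = 0) :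
    a = 0 ∧ b = 0 ∧ c = 0 ∧ d = 0 ∧ e = 0 := by
  have h1 := h 1 one_pos
  have h2 := h 2 two_pos
  have h3 := h 3 three_pos
  have h4 := h 4 four_pos
  have h5 := h 5 (by norm_num)
  refine ⟨?_, ?_, ?_, ?_, ?_⟩ <;> linarith

def fiberNum (r p q t : ℝ) : ℝ :=
  q ^ 2 * (r - 2) * t ^ 3
    + (q * ((2 - r) * p ^ 2 + 2 * (r - 3) * p + 2 * (r - 2) * q + r)) * t ^ 2
    + ((2 - r) * p ^ 2 + 2 * (r - 1) * p * q + (r - 2) * q ^ 2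
        + 2 * (r - 2) * p + 2 * r * q) * t
    + r * (2 * p + q)

theorem fiberScal_eq (r p q t : ℝ) :
    fiberScal r p q t =
      (r - 1) * (1 + t) ^ p / ((1 + q * t) ^ 2 * (1 + t) ^ 2) * fiberNum r p q t :=
  rfl

theorem hasDerivAt_fiberNum (r p q t : ℝ) :
    HasDerivAt (fiberNum r p q)
      (3 * (q ^ 2 * (r - 2)) * t ^ 2
        + 2 * (q * ((2 - r) * p ^ 2 + 2 * (r - 3) * p + 2 * (r - 2) * q + r)) * t
        + ((2 - r) * p ^ 2 + 2 * (r - 1) * p * q + (r - 2) * q ^ 2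
          + 2 * (r - 2) * p + 2 * r * q)) t := by
  have h := ((((hasDerivAt_pow 3 t).const_mul (q ^ 2 * (r - 2))).add
    ((hasDerivAt_pow 2 t).const_mul
      (q * ((2 - r) * p ^ 2 + 2 * (r - 3) * p + 2 * (r - 2) * q + r)))).add
    ((hasDerivAt_id t).const_mul ((2 - r) * p ^ 2 + 2 * (r - 1) * p * q + (r - 2) * q ^ 2
          + 2 * (r - 2) * p + 2 * r * q))).add_const (r * (2 * p + q))
  exact h.congr_deriv (by push_cast; ring)

theorem fiberScal_eq_fiberScal_zero_iff {r p q t : ℝ} (hr : r ≠ 1) (hq : 0 ≤ q)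
    (ht : 0 ≤ t) :
    fiberScal r p q t = fiberScal r p q 0 ↔
      (1 + t) ^ p * fiberNum r p q t = r * (2 * p + q) * ((1 + q * t) ^ 2 * (1 + t) ^ 2) := by
  have hQ : 0 < (1 + q * t) ^ 2 * (1 + t) ^ 2 := by positivity
  have hr1 : r - 1 ≠ 0 := sub_ne_zero.mpr hr
  have h0 : fiberNum r p q 0 = r * (2 * p + q) := by simp [fiberNum]
  rw [fiberScal_eq, fiberScal_eq, h0]
  simp only [mul_zero, add_zero, Real.one_rpow, one_pow, mul_one, div_one]
  rw [div_mul_eq_mul_div, div_eq_iff hQ.ne', mul_assoc, mul_assoc, mul_right_inj' hr1]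

theorem one_add_mul_deriv_eq_of_forall_rpow_mul_eq {P : ℝ → ℝ} {p q K t P' : ℝ}
    (hq : 0 ≤ q) (h : ∀ s > 0, (1 + s) ^ p * P s = K * ((1 + q * s) ^ 2 * (1 + s) ^ 2))
    (ht : 0 < t) (hP : HasDerivAt P P' t) :
    (1 + q * t) * ((1 + t) * P' + p * P t) = 2 * (1 + q + 2 * q * t) * P t := by
  have ht1 : 1 + t ≠ 0 := by positivity
  have hev :
      (fun s => (1 + s) ^ p * P s) =ᶠ[𝓝 t] fun s => K * ((1 + q * s) ^ 2 * (1 + s) ^ 2) :=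
    eventually_of_mem (Ioi_mem_nhds ht) h
  have hu : HasDerivAt (fun s => (1 + s) ^ p) (1 * p * (1 + t) ^ (p - 1)) t :=
    ((hasDerivAt_id t).const_add 1).rpow_const (Or.inl ht1)
  have hQ : HasDerivAt (fun s => (1 + q * s) ^ 2 * (1 + s) ^ 2)
      (2 * (1 + q * t) * q * (1 + t) ^ 2 + (1 + q * t) ^ 2 * (2 * (1 + t))) t := by
    have h := ((((hasDerivAt_id t).const_mul q).const_add 1).pow 2).mul
      (((hasDerivAt_id t).const_add 1).pow 2)
    exact h.congr_deriv (by simp only [Pi.pow_apply, id_eq]; ring)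
  have key := hu.mul_deriv_eq_of_mul_eventuallyEq hP hQ hev
  have hsplit : (1 + t) ^ (p - 1) * (1 + t) = (1 + t) ^ p := by
    rw [Real.rpow_sub_one ht1, div_mul_cancel₀ _ ht1]
  have hprod : (1 + t) ^ p * ((1 + q * t) * (1 + t) ^ 2) *
      ((1 + q * t) * ((1 + t) * P' + p * P t) - 2 * (1 + q + 2 * q * t) * P t) = 0 := by
    linear_combination (1 + t) * key - p * P t * (1 + q * t) ^ 2 * (1 + t) ^ 2 * hsplit
  have hpos : (1 + t) ^ p * ((1 + q * t) * (1 + t) ^ 2) ≠ 0 := by positivity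
  exact sub_eq_zero.mp ((mul_eq_zero.mp hprod).resolve_left hpos)

theorem fiberNum_coeffs_eq_zero {r p q K : ℝ} (hq : 0 ≤ q)
    (h : ∀ t > 0, (1 + t) ^ p * fiberNum r p q t = K * ((1 + q * t) ^ 2 * (1 + t) ^ 2)) :
    (r + 2) * (p ^ 2 - p * q - 2 * p - q ^ 2) = 0 ∧
      q ^ 2 * ((r - 2) * (p ^ 3 - 4 * p ^ 2 - 2 * p * q + 2 * p + 3 * q + 1)
        + 2 * (p - 1) * (p - 2)) = 0 ∧
      (r - 2) * q ^ 3 * (p - 1) = 0 := by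
  have hquartic : ∀ t > (0 : ℝ),
      (r - 2) * q ^ 3 * (p - 1) * t ^ 4
      + -(q ^ 2 * ((r - 2) * (p ^ 3 - 4 * p ^ 2 - 2 * p * q + 2 * p + 3 * q + 1)
          + 2 * (p - 1) * (p - 2))) * t ^ 3
      + (-2 * (r - 2) * p ^ 3 * q + 2 * (r - 1) * p ^ 2 * q ^ 2 + (7 * r - 16) * p ^ 2 * q
          + (r - 2) * p * q ^ 3 - 2 * (r - 1) * p * q ^ 2 - (5 * r - 12) * p * q
          - 3 * (r - 2) * q ^ 3 - 3 * (r + 2) * q ^ 2) * t ^ 2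
      + (-(r - 2) * p ^ 3 + 3 * r * p ^ 2 * q + 3 * (r - 2) * p ^ 2 - 6 * (r + 1) * p * q
          - 2 * (r - 2) * p - (r - 2) * q ^ 3 - 3 * (r + 2) * q ^ 2) * t
      + (r + 2) * (p ^ 2 - p * q - 2 * p - q ^ 2) = 0 := fun t ht => by
    have hode :=
      one_add_mul_deriv_eq_of_forall_rpow_mul_eq hq h ht (hasDerivAt_fiberNum r p q t)
    unfold fiberNum at hode
    linear_combination hode
  obtain ⟨h4, h3, -, -, h0⟩ := quartic_coeffs_eq_zero_of_forall_pos hquartic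
  exact ⟨h0, neg_eq_zero.mp h3, h4⟩

theorem eq_zero_or_eq_two_of_fiber_coeffs {r p q : ℝ} (hr : r + 2 ≠ 0) (hq : 0 ≤ q)
    (h0 : (r + 2) * (p ^ 2 - p * q - 2 * p - q ^ 2) = 0)
    (h3 : q ^ 2 * ((r - 2) * (p ^ 3 - 4 * p ^ 2 - 2 * p * q + 2 * p + 3 * q + 1)
        + 2 * (p - 1) * (p - 2)) = 0)
    (h4 : (r - 2) * q ^ 3 * (p - 1) = 0) :
    (p = 0 ∧ q = 0) ∨ (p = 2 ∧ q = 0) := by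
  have hc0 : p ^ 2 - p * q - 2 * p - q ^ 2 = 0 := (mul_eq_zero.mp h0).resolve_left hr
  obtain rfl : q = 0 := by
    by_contra hq0
    have hqpos : 0 < q := lt_of_le_of_ne hq (Ne.symm hq0)
    have hp1 : p - 1 ≠ 0 := by
      intro hp1
      obtain rfl : p = 1 := by linarith
      nlinarith
    have hr2 : r - 2 = 0 := by
      simpa [hq0, hp1] using h4
    have hp2 : p = 2 := by
      rw [hr2] at h3
      have : (p - 1) * (p - 2) = 0 := by simpa [hq0] using h3
      linarith [(mul_eq_zero.mp this).resolve_left hp1]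
    subst hp2
    nlinarith
  have : p * (p - 2) = 0 := by linear_combination hc0
  rcases mul_eq_zero.mp this with hp | hp
  · exact Or.inl ⟨hp, rfl⟩
  · exact Or.inr ⟨by linarith, rfl⟩

theorem stmt_0 (r : ℕ) (hr : 2 ≤ r) (p q : ℝ) (hq : 0 ≤ q) :
    (∀ t ≥ (0 : ℝ), fiberScal (r : ℝ) p q t = fiberScal (r : ℝ) p q 0) ↔
      ((p = 0 ∧ q = 0) ∨ (p = 2 ∧ q = 0)) := by
  have hr1 : (r : ℝ) ≠ 1 := by norm_cast; omega
  constructor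
  · intro h
    obtain ⟨h0, h3, h4⟩ := fiberNum_coeffs_eq_zero hq fun t ht =>
      (fiberScal_eq_fiberScal_zero_iff hr1 hq ht.le).mp (h t ht.le)
    exact eq_zero_or_eq_two_of_fiber_coeffs (by positivity) hq h0 h3 h4
  · rintro (⟨rfl, rfl⟩ | ⟨rfl, rfl⟩) <;> intro t ht <;>
      rw [fiberScal_eq_fiberScal_zero_iff hr1 le_rfl ht]
    · simp [fiberNum]
    · rw [Real.rpow_two]
      simp only [fiberNum]
      ring
end

section
/- Let r ≥ 2, q ≥ 0, p = 1, and f the fiber scalar curvature function of h_{1,q}. If for some constant C the identity f(t) − C·t/(1+t) = r(r-1)(2+q) holds for all t ≥ 0, then differentiating at t = 0 forces C = −(r-1)(q^2+q+1)(r+2) < 0. In particular, there is no such C > 0. -/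
theorem stmt_4 (r : ℕ) (hr : 2 ≤ r) (q C : ℝ) (hq : 0 ≤ q)
    (h : ∀ t ≥ (0 : ℝ),
        fiberScal (r : ℝ) 1 q t - C * t / (1 + t)
          = (r : ℝ) * ((r : ℝ) - 1) * (2 + q)) :
    C = -((r : ℝ) - 1) * (q ^ 2 + q + 1) * ((r : ℝ) + 2) ∧ C < 0 := by
  have hrR : (2 : ℝ) ≤ (r : ℝ) := by exact_mod_cast hr
  have hq1 : ((1 + q*1)^2 * (1+1)^2 : ℝ) ≠ 0 := by positivity
  have hq2 : ((1 + q*2)^2 * (1+2)^2 : ℝ) ≠ 0 := by positivity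
  have h1 := h 1 (by norm_num)
  have h2 := h 2 (by norm_num)
  unfold fiberScal at h1 h2
  rw [Real.rpow_one] at h1 h2
  rw [div_mul_eq_mul_div, div_sub_div _ _ hq1 (by norm_num : (1+(1:ℝ)) ≠ 0),
    div_eq_iff (by positivity)] at h1
  rw [div_mul_eq_mul_div, div_sub_div _ _ hq2 (by norm_num : (1+(2:ℝ)) ≠ 0),
    div_eq_iff (by positivity)] at h2
  have hN : q ^ 3 * (((r:ℝ) - 1) * (2*(r:ℝ)*q^2 + (3*(r:ℝ)+14)*q + ((r:ℝ)+10))) = 0 := by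
    linear_combination (-(1+2*q)^2/4) * h1 + ((1+q)^2/18) * h2
  have hpos : ((r:ℝ) - 1) * (2*(r:ℝ)*q^2 + (3*(r:ℝ)+14)*q + ((r:ℝ)+10)) > 0 := by
    have ha : (0:ℝ) < (r:ℝ) - 1 := by linarith
    have hb : (0:ℝ) < 2*(r:ℝ)*q^2 + (3*(r:ℝ)+14)*q + ((r:ℝ)+10) := by
      have h1 : (0:ℝ) ≤ (3*(r:ℝ)+14)*q := by positivity
      have h2 : (0:ℝ) ≤ 2*(r:ℝ)*q^2 := by positivity
      linarith
    exact mul_pos ha hb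
  have hq0 : q = 0 := by
    have h3 : q ^ 3 = 0 := by
      rcases mul_eq_zero.mp hN with h' | h'
      · exact h'
      · exact absurd h' (ne_of_gt hpos)
    exact pow_eq_zero_iff (by norm_num) |>.mp h3
  subst hq0
  have hC : C = -((r : ℝ) - 1) * (0 ^ 2 + 0 + 1) * ((r : ℝ) + 2) := by
    linear_combination (-1/4) * h1
  refine ⟨hC, ?_⟩
  rw [hC]
  nlinarith
end

section
/- The polynomial identity f'(t) = (r-1)(1+t)^p/((1+qt)^3(1+t)^3)·(a₁t⁴ + b₁t³ + c₁t² + d₁t + e₁) holds for the fiber scalar curvature f, where a₁ = (r-2)(p-1)q³ and e₁ = (p² − pq − q² − 2p)(r+2). In particular, if f is constant then (r-2)(p-1)q³ = 0 and (p² − pq − q² − 2p)(r+2) = 0. -/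
noncomputable def fiberScalNum (r p q t : ℝ) : ℝ :=
  q ^ 2 * (r - 2) * t ^ 3
    + (q * ((2 - r) * p ^ 2 + 2 * (r - 3) * p + 2 * (r - 2) * q + r)) * t ^ 2
    + ((2 - r) * p ^ 2 + 2 * (r - 1) * p * q + (r - 2) * q ^ 2
        + 2 * (r - 2) * p + 2 * r * q) * t
    + r * (2 * p + q)

noncomputable def fiberScalDerivNum (r p q t : ℝ) : ℝ :=
  ((r - 2) * (p - 1) * q ^ 3) * t ^ 4
    + (-(r * p ^ 3 - 4 * r * p ^ 2 - 2 * p ^ 3 - 2 * r * p * q + 2 * r * p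
          + 10 * p ^ 2 + 3 * r * q + 4 * p * q + r - 10 * p - 6 * q + 2) * q ^ 2) * t ^ 3
    + (-2 * r * p ^ 3 * q + 2 * r * p ^ 2 * q ^ 2 + r * p * q ^ 3
        + 7 * r * p ^ 2 * q + 4 * p ^ 3 * q - 2 * r * p * q ^ 2 - 2 * p ^ 2 * q ^ 2
        - 3 * r * q ^ 3 - 2 * p * q ^ 3 - 5 * r * p * q - 16 * p ^ 2 * q
        - 3 * r * q ^ 2 + 2 * p * q ^ 2 + 6 * q ^ 3 + 12 * p * q - 6 * q ^ 2) * t ^ 2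
    + (-r * p ^ 3 + 3 * r * p ^ 2 * q - r * q ^ 3 + 3 * r * p ^ 2 + 2 * p ^ 3
        - 6 * r * p * q - 3 * r * q ^ 2 + 2 * q ^ 3 - 2 * r * p - 6 * p ^ 2
        - 6 * p * q - 6 * q ^ 2 + 4 * p) * t
    + (p ^ 2 - p * q - q ^ 2 - 2 * p) * (r + 2)

lemma hasDerivAt_cubic (a b c d t : ℝ) :
    HasDerivAt (fun s => a * s ^ 3 + b * s ^ 2 + c * s + d) (3 * a * t ^ 2 + 2 * b * t + c) t := by
  have h := ((((hasDerivAt_pow 3 t).const_mul a).add ((hasDerivAt_pow 2 t).const_mul b)).add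
    ((hasDerivAt_id t).const_mul c)).add_const d
  exact h.congr_deriv (by ring)

lemma hasDerivAt_fiberScalNum (r p q t : ℝ) :
    HasDerivAt (fiberScalNum r p q)
      (3 * (q ^ 2 * (r - 2)) * t ^ 2
        + 2 * (q * ((2 - r) * p ^ 2 + 2 * (r - 3) * p + 2 * (r - 2) * q + r)) * t
        + ((2 - r) * p ^ 2 + 2 * (r - 1) * p * q + (r - 2) * q ^ 2
            + 2 * (r - 2) * p + 2 * r * q)) t :=
  hasDerivAt_cubic _ _ _ _ t

lemma hasDerivAt_one_add_rpow_div_mul (p q : ℝ) {P : ℝ → ℝ} {P' t : ℝ} (ht : 0 < 1 + t)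
    (hqt : 1 + q * t ≠ 0) (hP : HasDerivAt P P' t) :
    HasDerivAt (fun s => (1 + s) ^ p / ((1 + q * s) ^ 2 * (1 + s) ^ 2) * P s)
      ((1 + t) ^ p / ((1 + q * t) ^ 3 * (1 + t) ^ 3) *
        (((p - 2) * (1 + q * t) - 2 * q * (1 + t)) * P t + (1 + t) * (1 + q * t) * P')) t := by
  have hnum : HasDerivAt (fun s : ℝ => (1 + s) ^ p) (1 * p * (1 + t) ^ (p - 1)) t :=
    ((hasDerivAt_id t).const_add 1).rpow_const (Or.inl ht.ne')
  have hden : HasDerivAt (fun s : ℝ => (1 + q * s) ^ 2 * (1 + s) ^ 2)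
      (2 * (1 + q * t) * q * (1 + t) ^ 2 + (1 + q * t) ^ 2 * (2 * (1 + t))) t := by
    have h := ((((hasDerivAt_id t).const_mul q).const_add 1).fun_pow 2).mul
      (((hasDerivAt_id t).const_add 1).fun_pow 2)
    exact h.congr_deriv (by simp only [id, Nat.cast_ofNat]; ring)
  have hweight : HasDerivAt (fun s => (1 + s) ^ p / ((1 + q * s) ^ 2 * (1 + s) ^ 2))
      _ t := hnum.div hden (by positivity)
  refine (hweight.mul hP).congr_deriv ?_
  rw [Real.rpow_sub ht, Real.rpow_one]
  field_simp
  ring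

lemma fiberScal_eq_mul_fiberScalNum (r p q : ℝ) :
    fiberScal r p q =
      fun s => (r - 1) * ((1 + s) ^ p / ((1 + q * s) ^ 2 * (1 + s) ^ 2) * fiberScalNum r p q s) := by
  funext s
  rw [fiberScal, fiberScalNum]
  ring

lemma hasDerivAt_fiberScal (r p q : ℝ) {t : ℝ} (ht : 0 < 1 + t) (hqt : 1 + q * t ≠ 0) :
    HasDerivAt (fiberScal r p q)
      ((r - 1) * (1 + t) ^ p / ((1 + q * t) ^ 3 * (1 + t) ^ 3) * fiberScalDerivNum r p q t) t := by
  rw [fiberScal_eq_mul_fiberScalNum]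
  refine ((hasDerivAt_one_add_rpow_div_mul p q ht hqt
    (hasDerivAt_fiberScalNum r p q t)).const_mul (r - 1)).congr_deriv ?_
  rw [fiberScalNum, fiberScalDerivNum]
  ring

lemma quartic_coeffs_eq_zero {a b c d e : ℝ}
    (h : ∀ t : ℝ, 0 < t → a * t ^ 4 + b * t ^ 3 + c * t ^ 2 + d * t + e = 0) :
    a = 0 ∧ b = 0 ∧ c = 0 ∧ d = 0 ∧ e = 0 := by
  have h1 := h 1 (by norm_num)
  have h2 := h 2 (by norm_num)
  have h3 := h 3 (by norm_num)
  have h4 := h 4 (by norm_num)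
  have h5 := h 5 (by norm_num)
  norm_num at h1 h2 h3 h4 h5
  refine ⟨?_, ?_, ?_, ?_, ?_⟩ <;> linarith

lemma fiberScalDerivNum_eq_zero_of_const {r p q : ℝ} (hr : 1 < r) (hq : 0 ≤ q)
    (hconst : ∀ t ≥ (0 : ℝ), fiberScal r p q t = fiberScal r p q 0) {t : ℝ} (ht : 0 < t) :
    fiberScalDerivNum r p q t = 0 := by
  have h1t : 0 < 1 + t := by linarith
  have h1qt : 0 < 1 + q * t := by nlinarith [mul_nonneg hq ht.le]
  have hzero : HasDerivAt (fiberScal r p q) 0 t :=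
    (hasDerivAt_const t (fiberScal r p q 0)).congr_of_eventuallyEq
      (by filter_upwards [eventually_gt_nhds ht] with s hs using hconst s hs.le)
  have hfactor : 0 < (r - 1) * (1 + t) ^ p / ((1 + q * t) ^ 3 * (1 + t) ^ 3) := by
    have : 0 < r - 1 := by linarith
    positivity
  have heq := (hasDerivAt_fiberScal r p q h1t h1qt.ne').unique hzero
  exact (mul_eq_zero.mp heq).resolve_left hfactor.ne'

theorem stmt_5 (r : ℕ) (hr : 2 ≤ r) (p q : ℝ) (hq : 0 ≤ q) :
    (∀ t ≥ (0 : ℝ),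
      HasDerivAt (fiberScal (r : ℝ) p q)
        (((r : ℝ) - 1) * (1 + t) ^ p / ((1 + q * t) ^ 3 * (1 + t) ^ 3) *
          ((((r : ℝ) - 2) * (p - 1) * q ^ 3) * t ^ 4
            + (-((r : ℝ) * p ^ 3 - 4 * r * p ^ 2 - 2 * p ^ 3 - 2 * r * p * q + 2 * r * p
                  + 10 * p ^ 2 + 3 * r * q + 4 * p * q + r - 10 * p - 6 * q + 2) * q ^ 2) * t ^ 3
            + (-2 * (r : ℝ) * p ^ 3 * q + 2 * r * p ^ 2 * q ^ 2 + r * p * q ^ 3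
                + 7 * r * p ^ 2 * q + 4 * p ^ 3 * q - 2 * r * p * q ^ 2 - 2 * p ^ 2 * q ^ 2
                - 3 * r * q ^ 3 - 2 * p * q ^ 3 - 5 * r * p * q - 16 * p ^ 2 * q
                - 3 * r * q ^ 2 + 2 * p * q ^ 2 + 6 * q ^ 3 + 12 * p * q - 6 * q ^ 2) * t ^ 2
            + (-(r : ℝ) * p ^ 3 + 3 * r * p ^ 2 * q - r * q ^ 3 + 3 * r * p ^ 2 + 2 * p ^ 3
                - 6 * r * p * q - 3 * r * q ^ 2 + 2 * q ^ 3 - 2 * r * p - 6 * p ^ 2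
                - 6 * p * q - 6 * q ^ 2 + 4 * p) * t
            + (p ^ 2 - p * q - q ^ 2 - 2 * p) * ((r : ℝ) + 2))) t) ∧
    ((∀ t ≥ (0 : ℝ), fiberScal (r : ℝ) p q t = fiberScal (r : ℝ) p q 0) →
      ((r : ℝ) - 2) * (p - 1) * q ^ 3 = 0 ∧
      (p ^ 2 - p * q - q ^ 2 - 2 * p) * ((r : ℝ) + 2) = 0) := by
  have hr' : (1 : ℝ) < r := by exact_mod_cast hr
  refine ⟨fun t ht => ?_, fun hconst => ?_⟩
  · have hqt : 0 < 1 + q * t := by nlinarith [mul_nonneg hq ht]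
    exact hasDerivAt_fiberScal (r : ℝ) p q (by linarith) hqt.ne'
  · obtain ⟨ha, -, -, -, he⟩ := quartic_coeffs_eq_zero fun t ht =>
      fiberScalDerivNum_eq_zero_of_const hr' hq hconst ht
    exact ⟨ha, he⟩
end

section
/- Let V be a real inner product space of dimension n, and for X, Y ∈ V let X∧Y denote the skew-symmetric endomorphism Z ↦ ⟨Y,Z⟩X − ⟨X,Z⟩Y. If X, Y are orthonormal and F is a skew-symmetric endomorphism of V, then the Hilbert–Schmidt norm satisfies ‖[X∧Y, F]‖² = 2‖F(Y)‖² + 2‖F(X)‖² − 4⟨F(X),Y⟩², where [A,B] = A∘B − B∘A. -/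
/-- The skew-symmetric endomorphism `X ∧ Y : Z ↦ ⟨Y,Z⟩X − ⟨X,Z⟩Y`. -/
noncomputable def wedge {V : Type*} [NormedAddCommGroup V] [InnerProductSpace ℝ V]
    (X Y : V) : V → V :=
  fun Z => (inner ℝ Y Z : ℝ) • X - (inner ℝ X Z : ℝ) • Y

/-- Commutator of two endomorphisms (as plain functions). -/
def commut {V : Type*} [AddCommGroup V] (A B : V → V) : V → V := fun Z => A (B Z) - B (A Z)

/-!
For skew-symmetric `F` the commutator `[X ∧ Y, F]` is `-(F X ∧ Y + X ∧ F Y)`, a sum of four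
rank-one maps `Z ↦ ⟪u k, Z⟫ v k`. The squared Hilbert–Schmidt norm of such a sum is
`∑ k l, ⟪u k, u l⟫ ⟪v k, v l⟫` by Parseval, and orthonormality of `X, Y` together with
`⟪F u, u⟫ = 0` kills all but eight of these sixteen terms.
-/

open Finset RealInnerProductSpace

theorem OrthonormalBasis.sum_norm_sq_sum_inner_smul {ι κ V : Type*} [Fintype ι] [Fintype κ]
    [NormedAddCommGroup V] [InnerProductSpace ℝ V] (b : OrthonormalBasis ι ℝ V)
    (u v : κ → V) :
    ∑ i, ‖∑ k, ⟪u k, b i⟫ • v k‖ ^ 2 = ∑ k, ∑ l, ⟪u k, u l⟫ * ⟪v k, v l⟫ := by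
  have parseval (k l : κ) : ∑ i, ⟪u k, b i⟫ * ⟪u l, b i⟫ = ⟪u k, u l⟫ := by
    simpa only [real_inner_comm (u l)] using b.sum_inner_mul_inner (u k) (u l)
  simp_rw [← real_inner_self_eq_norm_sq, sum_inner, inner_sum, real_inner_smul_left,
    real_inner_smul_right]
  rw [sum_comm]
  refine sum_congr rfl fun k _ => ?_
  rw [sum_comm]
  refine sum_congr rfl fun l _ => ?_
  rw [← parseval, sum_mul]
  exact sum_congr rfl fun i _ => by ring

section Skew

variable {V : Type*} [NormedAddCommGroup V] [InnerProductSpace ℝ V] {F : V →ₗ[ℝ] V}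

theorem inner_map_self_eq_zero_of_skew (hF : ∀ u v : V, ⟪F u, v⟫ = -⟪u, F v⟫) (x : V) :
    ⟪F x, x⟫ = 0 := by
  linarith [hF x x, real_inner_comm x (F x)]

theorem commut_wedge_apply_of_skew (hF : ∀ u v : V, ⟪F u, v⟫ = -⟪u, F v⟫) (X Y Z : V) :
    commut (wedge X Y) F Z =
      ⟪F X, Z⟫ • Y + ⟪F Y, Z⟫ • (-X) + ⟪Y, Z⟫ • (-F X) + ⟪X, Z⟫ • F Y := by
  have hFX : ⟪X, F Z⟫ = -⟪F X, Z⟫ := by linarith [hF X Z]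
  have hFY : ⟪Y, F Z⟫ = -⟪F Y, Z⟫ := by linarith [hF Y Z]
  simp only [commut, wedge, map_sub, map_smul, hFX, hFY]
  module

end Skew

theorem stmt_7_general {V : Type*} [NormedAddCommGroup V] [InnerProductSpace ℝ V]
    {n : ℕ} (b : OrthonormalBasis (Fin n) ℝ V)
    (X Y : V) (hX : ‖X‖ = 1) (hY : ‖Y‖ = 1) (hXY : (inner ℝ X Y : ℝ) = 0)
    (F : V →ₗ[ℝ] V) (hF : ∀ u v : V, (inner ℝ (F u) v : ℝ) = -(inner ℝ u (F v) : ℝ)) :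
    ∑ i, ‖commut (wedge X Y) F (b i)‖ ^ 2
      = 2 * ‖F Y‖ ^ 2 + 2 * ‖F X‖ ^ 2 - 4 * (inner ℝ (F X) Y : ℝ) ^ 2 := by
  have hcommut_rank_one (Z : V) : commut (wedge X Y) F Z =
      ∑ k, ⟪![F X, F Y, Y, X] k, Z⟫ • ![Y, -X, -F X, F Y] k := by
    simp [commut_wedge_apply_of_skew hF, Fin.sum_univ_four, add_assoc]
  have hFXX := inner_map_self_eq_zero_of_skew hF X
  have hFYY := inner_map_self_eq_zero_of_skew hF Y
  have hFYX : ⟪F Y, X⟫ = -⟪F X, Y⟫ := by rw [hF, real_inner_comm]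
  simp_rw [hcommut_rank_one, b.sum_norm_sq_sum_inner_smul]
  simp [Fin.sum_univ_four, real_inner_comm X Y, real_inner_comm (F X) X, real_inner_comm (F Y) Y,
    real_inner_comm (F X) Y, real_inner_comm (F Y) X, real_inner_comm (F X) (F Y),
    hX, hY, hXY, hFXX, hFYY, hFYX]
  ring

theorem stmt_7 {V : Type*} [NormedAddCommGroup V] [InnerProductSpace ℝ V]
    [FiniteDimensional ℝ V] {n : ℕ} (b : OrthonormalBasis (Fin n) ℝ V)
    (X Y : V) (hX : ‖X‖ = 1) (hY : ‖Y‖ = 1) (hXY : (inner ℝ X Y : ℝ) = 0)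
    (F : V →ₗ[ℝ] V) (hF : ∀ u v : V, (inner ℝ (F u) v : ℝ) = -(inner ℝ u (F v) : ℝ)) :
    ∑ i, ‖commut (wedge X Y) F (b i)‖ ^ 2
      = 2 * ‖F Y‖ ^ 2 + 2 * ‖F X‖ ^ 2 - 4 * (inner ℝ (F X) Y : ℝ) ^ 2 :=
  stmt_7_general b X Y hX hY hXY F hF
end

section
/- Let n ≥ 3, r = n(n+1)/2, c real, ϖ real, and α ≥ 1, and suppose |Z|² + |F|² = α − 1 with |Z|², |F|² ≥ 0. Let s = n(n−1)c + (r−1)/α²·(6 + (r−2)(α²+α+1)) − (2ϖ²/α)((n−1)|Z|² + 2(n−2)|F|²). Then α²s = (n(n−1)c + (r−1)(r−2) − 4ϖ²(n−2))α² + ((r−1)(r−2) + 4ϖ²(n−2))α + (r−1)(r+4) + 2(n−3)ϖ²α|Z|², and if n(n−1)c + (r−1)(r−2) − 4ϖ²(n−2) ≥ 0 then α²s > 0. -/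
theorem stmt_16 (n : ℕ) (hn : 3 ≤ n) (r : ℝ) (hr : r = (n : ℝ) * ((n : ℝ) + 1) / 2)
    (c ϖ : ℝ) (Z2 F2 : ℝ) (hZ2 : 0 ≤ Z2) (hF2 : 0 ≤ F2)
    (α : ℝ) (hα : α = 1 + Z2 + F2)
    (s : ℝ)
    (hs : s = (n : ℝ) * ((n : ℝ) - 1) * c
        + (r - 1) / α ^ 2 * (6 + (r - 2) * (α ^ 2 + α + 1))
        - (2 * ϖ ^ 2 / α) * (((n : ℝ) - 1) * Z2 + 2 * ((n : ℝ) - 2) * F2)) :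
    α ^ 2 * s
        = ((n : ℝ) * ((n : ℝ) - 1) * c + (r - 1) * (r - 2) - 4 * ϖ ^ 2 * ((n : ℝ) - 2)) * α ^ 2
          + ((r - 1) * (r - 2) + 4 * ϖ ^ 2 * ((n : ℝ) - 2)) * α
          + (r - 1) * (r + 4) + 2 * ((n : ℝ) - 3) * ϖ ^ 2 * α * Z2 ∧
    ((n : ℝ) * ((n : ℝ) - 1) * c + (r - 1) * (r - 2) - 4 * ϖ ^ 2 * ((n : ℝ) - 2) ≥ 0 →
      0 < α ^ 2 * s) := by
  have hn3 : (3 : ℝ) ≤ (n : ℝ) := by exact_mod_cast hn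
  have hα1 : (1 : ℝ) ≤ α := by rw [hα]; linarith
  have hα0 : α ≠ 0 := by linarith
  have hr6 : (6 : ℝ) ≤ r := by rw [hr]; nlinarith
  have hid : α ^ 2 * s
      = ((n : ℝ) * ((n : ℝ) - 1) * c + (r - 1) * (r - 2) - 4 * ϖ ^ 2 * ((n : ℝ) - 2)) * α ^ 2
        + ((r - 1) * (r - 2) + 4 * ϖ ^ 2 * ((n : ℝ) - 2)) * α
        + (r - 1) * (r + 4) + 2 * ((n : ℝ) - 3) * ϖ ^ 2 * α * Z2 := by
    rw [hs, hα]
    field_simp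
    ring
  refine ⟨hid, fun hA => ?_⟩
  rw [hid]
  have h1 : 0 ≤ ϖ ^ 2 := sq_nonneg _
  have hαpos : (0:ℝ) < α := by linarith
  have t1 : 0 ≤ (↑n - 3) * ϖ ^ 2 * α * Z2 :=
    mul_nonneg (mul_nonneg (mul_nonneg (by linarith) h1) hαpos.le) hZ2
  have t2 : 0 ≤ ((r - 1) * (r - 2) + 4 * ϖ ^ 2 * (↑n - 2)) * α := by
    apply mul_nonneg _ hαpos.le
    have : 0 ≤ ϖ ^ 2 * (↑n - 2) := mul_nonneg h1 (by linarith)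
    nlinarith
  have t3 : 0 ≤ (↑n * (↑n - 1) * c + (r - 1) * (r - 2) - 4 * ϖ ^ 2 * (↑n - 2)) * α ^ 2 :=
    mul_nonneg hA (sq_nonneg α)
  nlinarith [t1, t2, t3]
end

section
/- Let n = 2, c real, ϖ real, α ≥ 1, |F|² ≥ 0 with |Z|² = α − 1 − |F|² ≥ 0, and let s be the scalar curvature of (AO(M,k), h_{1,1}) for n = 2, r = 3. Then α²s = 2(c + 1 − ϖ²)α² + 2(1 + ϖ²)α + 14 + 2ϖ²α|F|². Consequently s > 0 for all α ≥ 1 and admissible Z, F if and only if c + 1 − ϖ² ≥ 0. -/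
theorem stmt_17 (c ϖ : ℝ)
    (s : ℝ → ℝ → ℝ)
    (hs : ∀ α F2 : ℝ, s α F2 = 2 * c
        + 2 / α ^ 2 * (6 + (α ^ 2 + α + 1))
        - (2 * ϖ ^ 2 / α) * (α - 1 - F2)) :
    (∀ α F2 : ℝ, 1 ≤ α → 0 ≤ F2 → F2 ≤ α - 1 →
      α ^ 2 * s α F2
        = 2 * (c + 1 - ϖ ^ 2) * α ^ 2 + 2 * (1 + ϖ ^ 2) * α + 14 + 2 * ϖ ^ 2 * α * F2) ∧
    ((∀ α F2 : ℝ, 1 ≤ α → 0 ≤ F2 → F2 ≤ α - 1 → 0 < s α F2) ↔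
      c + 1 - ϖ ^ 2 ≥ 0) := by
  have key : ∀ α F2 : ℝ, 1 ≤ α →
      α ^ 2 * s α F2
        = 2 * (c + 1 - ϖ ^ 2) * α ^ 2 + 2 * (1 + ϖ ^ 2) * α + 14 + 2 * ϖ ^ 2 * α * F2 := by
    intro α F2 hα
    have hα0 : α ≠ 0 := by positivity
    rw [hs]
    field_simp
    ring
  refine ⟨fun α F2 hα _ _ => key α F2 hα, ?_, ?_⟩
  · intro hpos
    by_contra hneg
    push_neg at hneg
    set A := -(c + 1 - ϖ ^ 2) with hA
    have hApos : 0 < A := by simp [hA]; linarith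
    set α := max 1 ((1 + ϖ ^ 2 + 7) / A) with hαd
    have hα1 : 1 ≤ α := le_max_left _ _
    have hα2 : (1 + ϖ ^ 2 + 7) / A ≤ α := le_max_right _ _
    have hAα : 1 + ϖ ^ 2 + 7 ≤ A * α := by
      rw [div_le_iff₀ hApos] at hα2; linarith [hα2]
    have hk := key α 0 hα1
    have hsp := hpos α 0 hα1 le_rfl (by linarith)
    have h2 : 0 < α ^ 2 * s α 0 := by positivity
    rw [hk] at h2
    nlinarith [sq_nonneg α, hα1, hAα, hApos]
  · intro hge α F2 hα1 hF2 hF2'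
    have hk := key α F2 hα1
    have h2 : 0 < α ^ 2 * s α F2 := by
      rw [hk]
      nlinarith [sq_nonneg α, sq_nonneg ϖ, mul_nonneg (mul_nonneg (sq_nonneg ϖ) (by linarith : (0:ℝ) ≤ α)) hF2]
    nlinarith [sq_nonneg α, h2]
end

section
/- With H_X F = ck·F(X) and H_X Y = (c/2)·X∧Y on a real inner product space (F skew-symmetric), one has H_Y(H_X F) − H_X(H_Y F) = −(c²k/2)·[F, X∧Y], where the action of H on a vector v produces the endomorphism-valued term via H_Y v = (c/2)Y∧v. Hence R(X,Y)F + H_Y H_X F − H_X H_Y F = −2ϖ·[X∧Y, F] where R(X,Y)F = [R(X,Y), F] = [−c·X∧Y, F] and ϖ = c(2−ck)/4. -/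
/-!
A skew-symmetric `F` acts on `X ∧ Y` as a derivation: `[F, X ∧ Y] = FX ∧ Y + X ∧ FY`.
Since `∧` is bilinear and antisymmetric, `H_Y H_X F − H_X H_Y F = (c²k/2)(Y ∧ FX − X ∧ FY)`
is `−(c²k/2)[F, X ∧ Y]`; the second identity then follows from `[F, X∧Y] = −[X∧Y, F]`
and `c − c²k/4 = 2ϖ`.
-/

section Wedge

variable {V : Type*} [NormedAddCommGroup V] [InnerProductSpace ℝ V]

theorem wedge_smul_right (a : ℝ) (X Y z : V) : wedge X (a • Y) z = a • wedge X Y z := by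
  simp only [wedge, inner_smul_left, RCLike.conj_to_real]
  module

theorem wedge_swap (X Y z : V) : wedge Y X z = -wedge X Y z := by
  simp only [wedge, neg_sub]

theorem commut_wedge_of_skew (F : V →ₗ[ℝ] V)
    (hF : ∀ u v : V, (inner ℝ (F u) v : ℝ) = -(inner ℝ u (F v) : ℝ)) (X Y z : V) :
    commut F (wedge X Y) z = wedge (F X) Y z + wedge X (F Y) z := by
  simp only [commut, wedge, map_sub, map_smul, hF]
  module

end Wedge

theorem commut_antisymm {V : Type*} [AddCommGroup V] (A B : V → V) (z : V) :
    commut A B z = -commut B A z := by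
  simp only [commut, neg_sub]

theorem stmt_19 {V : Type*} [NormedAddCommGroup V] [InnerProductSpace ℝ V]
    (c k ϖ : ℝ) (hϖ : ϖ = c * (2 - c * k) / 4) (X Y : V)
    (F : V →ₗ[ℝ] V) (hF : ∀ u v : V, (inner ℝ (F u) v : ℝ) = -(inner ℝ u (F v) : ℝ)) :
    -- `H_Y(H_X F) − H_X(H_Y F) = −(c²k/2)[F, X∧Y]`, where
    -- `H_X F = ck F(X)` and `H_Y v = (c/2) Y∧v`:
    (∀ z : V,
      (c / 2) • wedge Y ((c * k) • F X) z - (c / 2) • wedge X ((c * k) • F Y) z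
        = -(c ^ 2 * k / 2) • commut F (wedge X Y) z) ∧
    -- hence `R(X,Y)F + H_Y H_X F − H_X H_Y F = −2ϖ [X∧Y, F]` with `R(X,Y)F = [−c X∧Y, F]`:
    (∀ z : V,
      (-c) • commut (wedge X Y) F z
          + ((c / 2) • wedge Y ((c * k) • F X) z - (c / 2) • wedge X ((c * k) • F Y) z)
        = -(2 * ϖ) • commut (wedge X Y) F z) := by
  have bracket : ∀ z : V,
      (c / 2) • wedge Y ((c * k) • F X) z - (c / 2) • wedge X ((c * k) • F Y) z
        = -(c ^ 2 * k / 2) • commut F (wedge X Y) z := by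
    intro z
    rw [wedge_smul_right, wedge_smul_right, wedge_swap, commut_wedge_of_skew F hF]
    module
  refine ⟨bracket, fun z => ?_⟩
  rw [bracket, commut_antisymm F, hϖ]
  module
end
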